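/- arXiv:1502.03235 — 4 statements merged into one kernel-verified Lean document; each statement's English description precedes it below -/
import Mathlib

section
/- If G is the direct cosum of G' and G'' (disjoint union of vertex sets, with all edges of G', all edges of G'', and every vertex of G' joined to every vertex of G''), then ϑ(G) = max{ϑ(G'), ϑ(G'')}. -/
/-- The Lovász theta number of a graph `G`. -/
noncomputable def lovaszTheta {V : Type*} [Fintype V] (G : SimpleGraph V) : ℝ :=
  sSup {x : ℝ |
    ∃ (d : ℕ) (u : V → EuclideanSpace ℝ (Fin d)) (ψ : EuclideanSpace ℝ (Fin d)),
      (∀ i, ‖u i‖ = 1) ∧ ‖ψ‖ = 1 ∧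
      (∀ i j, G.Adj i j → @inner ℝ _ _ (u i) (u j) = 0) ∧
      x = ∑ i, (@inner ℝ _ _ ψ (u i)) ^ 2}

/-- The direct cosum (join) of two graphs: disjoint union of the vertex sets,
keeping all edges of both graphs and joining every vertex of the first
to every vertex of the second. -/
def graphJoin {V W : Type*} (G : SimpleGraph V) (H : SimpleGraph W) :
    SimpleGraph (V ⊕ W) where
  Adj x y := match x, y with
    | .inl u, .inl v => G.Adj u v
    | .inr u, .inr v => H.Adj u v
    | .inl _, .inr _ => True
    | .inr _, .inl _ => True
  symm := ⟨by rintro (u | u) (v | v) h <;> first | exact h.symm | trivial⟩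
  loopless := ⟨by rintro (u | u) h; exacts [G.irrefl h, H.irrefl h]⟩

/-! ϑ(G) is the supremum of `∑ i, ⟪ψ, u i⟫²` over unit vectors `ψ` and unit vectors `u i` that
are orthogonal along the edges of `G`. A representation of `G'` extends to the join by sending the
vertices of `G''` to an orthonormal family in new coordinates, orthogonal to `ψ`; hence
ϑ(G') ≤ ϑ(join), and likewise for `G''`. Conversely, in a representation of the join the vectors of
the two sides span orthogonal subspaces `K` and `L`, and the sum over each side only sees the
projection of `ψ` to that subspace, so the total is at most
`‖P_K ψ‖² ϑ(G') + ‖P_L ψ‖² ϑ(G'') ≤ max (ϑ(G'), ϑ(G''))` as `‖P_K ψ‖² + ‖P_L ψ‖² ≤ ‖ψ‖² = 1`. -/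

open scoped RealInnerProductSpace

section

variable {V W : Type*} [Fintype V] [Fintype W]
  {E : Type*} [NormedAddCommGroup E] [InnerProductSpace ℝ E]

/-- `lovaszTheta G = sSup (thetaValues G)` holds by definition. -/
def thetaValues (G : SimpleGraph V) : Set ℝ :=
  {x : ℝ |
    ∃ (d : ℕ) (u : V → EuclideanSpace ℝ (Fin d)) (ψ : EuclideanSpace ℝ (Fin d)),
      (∀ i, ‖u i‖ = 1) ∧ ‖ψ‖ = 1 ∧
      (∀ i j, G.Adj i j → ⟪u i, u j⟫ = 0) ∧
      x = ∑ i, ⟪ψ, u i⟫ ^ 2}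

lemma sum_inner_sq_mem_thetaValues [FiniteDimensional ℝ E] {G : SimpleGraph V} {u : V → E}
    {ψ : E} (hu : ∀ i, ‖u i‖ = 1) (hψ : ‖ψ‖ = 1) (horth : ∀ i j, G.Adj i j → ⟪u i, u j⟫ = 0) :
    ∑ i, ⟪ψ, u i⟫ ^ 2 ∈ thetaValues G := by
  let f := (stdOrthonormalBasis ℝ E).repr
  refine ⟨_, f ∘ u, f ψ, fun i => by simp [hu], by simp [hψ], fun i j hij => ?_, ?_⟩
  · simpa [f.inner_map_map] using horth i j hij
  · simp [f.inner_map_map]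

lemma zero_mem_thetaValues (G : SimpleGraph V) : 0 ∈ thetaValues G := by
  classical
  simpa [EuclideanSpace.inner_single_left] using
    sum_inner_sq_mem_thetaValues (G := G) (u := fun i => EuclideanSpace.single (some i) (1 : ℝ))
      (ψ := EuclideanSpace.single none 1) (by simp) (by simp)
      (fun i j hij => by simp [EuclideanSpace.inner_single_left, hij.ne'])

lemma thetaValues_bddAbove (G : SimpleGraph V) : BddAbove (thetaValues G) := by
  refine ⟨Fintype.card V, ?_⟩
  rintro x ⟨d, u, ψ, hu, hψ, -, rfl⟩
  calc ∑ i, ⟪ψ, u i⟫ ^ 2 ≤ ∑ _i : V, (1 : ℝ) := by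
        gcongr with i
        have := abs_real_inner_le_norm ψ (u i)
        rw [hψ, hu i, one_mul] at this
        nlinarith [abs_nonneg ⟪ψ, u i⟫, sq_abs ⟪ψ, u i⟫]
    _ = Fintype.card V := by simp

lemma lovaszTheta_nonneg (G : SimpleGraph V) : 0 ≤ lovaszTheta G :=
  le_csSup (thetaValues_bddAbove G) (zero_mem_thetaValues G)

lemma sum_inner_sq_le_norm_sq_mul_lovaszTheta [FiniteDimensional ℝ E] {G : SimpleGraph V}
    {u : V → E} (hu : ∀ i, ‖u i‖ = 1) (horth : ∀ i j, G.Adj i j → ⟪u i, u j⟫ = 0) (φ : E) :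
    ∑ i, ⟪φ, u i⟫ ^ 2 ≤ ‖φ‖ ^ 2 * lovaszTheta G := by
  rcases eq_or_ne φ 0 with rfl | hφ
  · simp
  have hφ' : 0 < ‖φ‖ := norm_pos_iff.mpr hφ
  have hunit : ‖‖φ‖⁻¹ • φ‖ = 1 := by rw [norm_smul, norm_inv, norm_norm, inv_mul_cancel₀ hφ'.ne']
  have hle := le_csSup (thetaValues_bddAbove G)
    (sum_inner_sq_mem_thetaValues hu hunit horth)
  simp only [real_inner_smul_left, mul_pow, ← Finset.mul_sum, inv_pow] at hle
  rwa [inv_mul_le_iff₀ (by positivity)] at hle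

/-- Projecting `ψ` onto a subspace containing the `u i` leaves the sum unchanged. -/
lemma sum_inner_sq_le_norm_sq_starProjection_mul_lovaszTheta [FiniteDimensional ℝ E]
    {G : SimpleGraph V} {u : V → E} (hu : ∀ i, ‖u i‖ = 1)
    (horth : ∀ i j, G.Adj i j → ⟪u i, u j⟫ = 0) (K : Submodule ℝ E) (huK : ∀ i, u i ∈ K) (ψ : E) :
    ∑ i, ⟪ψ, u i⟫ ^ 2 ≤ ‖K.starProjection ψ‖ ^ 2 * lovaszTheta G := by
  have hproj (i : V) : ⟪ψ, u i⟫ = ⟪K.starProjection ψ, u i⟫ := by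
    rw [K.inner_starProjection_left_eq_right, K.starProjection_eq_self_iff.mpr (huK i)]
  simp only [hproj]
  exact sum_inner_sq_le_norm_sq_mul_lovaszTheta hu horth _

lemma Submodule.IsOrtho.norm_sq_starProjection_add_le {𝕜 F : Type*} [RCLike 𝕜]
    [NormedAddCommGroup F] [InnerProductSpace 𝕜 F] {K L : Submodule 𝕜 F}
    [K.HasOrthogonalProjection] [L.HasOrthogonalProjection] (hKL : K ⟂ L) (x : F) :
    ‖K.starProjection x‖ ^ 2 + ‖L.starProjection x‖ ^ 2 ≤ ‖x‖ ^ 2 := by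
  have hL : L.starProjection x = L.starProjection (Kᗮ.starProjection x) := by
    conv_lhs => rw [← K.starProjection_add_starProjection_orthogonal x]
    rw [map_add, ← ContinuousLinearMap.comp_apply, hKL.symm.starProjection_comp_starProjection]
    simp
  rw [K.norm_sq_eq_add_norm_sq_starProjection x, hL]
  gcongr
  exact L.norm_starProjection_apply_le _

lemma le_max_of_thetaValues_graphJoin (G : SimpleGraph V) (H : SimpleGraph W) {x : ℝ}
    (hx : x ∈ thetaValues (graphJoin G H)) : x ≤ max (lovaszTheta G) (lovaszTheta H) := by
  obtain ⟨d, u, ψ, hu, hψ, horth, rfl⟩ := hx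
  set K := Submodule.span ℝ (Set.range (u ∘ Sum.inl))
  set L := Submodule.span ℝ (Set.range (u ∘ Sum.inr))
  have hKL : K ⟂ L := by
    rw [Submodule.isOrtho_span]
    rintro _ ⟨i, rfl⟩ _ ⟨j, rfl⟩
    exact horth (.inl i) (.inr j) trivial
  have hK := sum_inner_sq_le_norm_sq_starProjection_mul_lovaszTheta (G := G) (fun i => hu _)
    (fun i j hij => horth (.inl i) (.inl j) hij) K (fun i => Submodule.subset_span ⟨i, rfl⟩) ψ
  have hL := sum_inner_sq_le_norm_sq_starProjection_mul_lovaszTheta (G := H) (fun i => hu _)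
    (fun i j hij => horth (.inr i) (.inr j) hij) L (fun i => Submodule.subset_span ⟨i, rfl⟩) ψ
  have hsum := hKL.norm_sq_starProjection_add_le ψ
  rw [hψ, one_pow] at hsum
  have hG := lovaszTheta_nonneg G
  rw [Fintype.sum_sum_type]
  nlinarith [le_max_left (lovaszTheta G) (lovaszTheta H),
    le_max_right (lovaszTheta G) (lovaszTheta H)]

lemma thetaValues_subset_graphJoin_left (G : SimpleGraph V) (H : SimpleGraph W) :
    thetaValues G ⊆ thetaValues (graphJoin G H) := by
  classical
  rintro x ⟨d, u, ψ, hu, hψ, horth, rfl⟩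
  let u' : V ⊕ W → WithLp 2 (EuclideanSpace ℝ (Fin d) × EuclideanSpace ℝ W) :=
    Sum.elim (fun i => WithLp.toLp 2 (u i, 0))
      (fun j => WithLp.toLp 2 (0, EuclideanSpace.single j 1))
  have key := sum_inner_sq_mem_thetaValues (G := graphJoin G H) (u := u')
    (ψ := WithLp.toLp 2 (ψ, 0)) ?_ ?_ ?_
  · simpa [u', WithLp.prod_inner_apply, Fintype.sum_sum_type] using key
  · rintro (i | j) <;> simp [u', hu]
  · simp [hψ]
  · rintro (i | j) (i' | j') hadj <;> simp [u', WithLp.prod_inner_apply]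
    · exact horth i i' hadj
    · simp [EuclideanSpace.inner_single_left, (show H.Adj j j' from hadj).ne']

lemma thetaValues_subset_of_le_comap {V₂ : Type*} [Fintype V₂] {G : SimpleGraph V}
    {G₂ : SimpleGraph V₂} (e : V ≃ V₂) (h : G ≤ G₂.comap e) :
    thetaValues G₂ ⊆ thetaValues G := by
  rintro x ⟨d, u, ψ, hu, hψ, horth, rfl⟩
  exact ⟨d, u ∘ e, ψ, fun i => hu (e i), hψ, fun i j hij => horth _ _ (h hij),
    (e.sum_comp fun i => ⟪ψ, u i⟫ ^ 2).symm⟩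

lemma thetaValues_subset_graphJoin_right (G : SimpleGraph V) (H : SimpleGraph W) :
    thetaValues H ⊆ thetaValues (graphJoin G H) :=
  (thetaValues_subset_graphJoin_left H G).trans <|
    thetaValues_subset_of_le_comap (Equiv.sumComm V W) fun a b hab => by
      rcases a with a | a <;> rcases b with b | b <;> exact hab

lemma lovaszTheta_le_of_thetaValues_subset {V₂ : Type*} [Fintype V₂] {G : SimpleGraph V}
    {G₂ : SimpleGraph V₂} (h : thetaValues G ⊆ thetaValues G₂) : lovaszTheta G ≤ lovaszTheta G₂ :=
  csSup_le_csSup (thetaValues_bddAbove G₂) ⟨0, zero_mem_thetaValues G⟩ h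

end

/-- `ϑ` of the direct cosum of `G'` and `G''` is `max {ϑ(G'), ϑ(G'')}`. -/
theorem stmt_7 {V W : Type*} [Fintype V] [Fintype W]
    (G' : SimpleGraph V) (G'' : SimpleGraph W) :
    lovaszTheta (graphJoin G' G'') = max (lovaszTheta G') (lovaszTheta G'') := by
  refine le_antisymm ?_ (max_le ?_ ?_)
  · exact csSup_le ⟨0, zero_mem_thetaValues _⟩ fun _ hx =>
      le_max_of_thetaValues_graphJoin G' G'' hx
  · exact lovaszTheta_le_of_thetaValues_subset (thetaValues_subset_graphJoin_left G' G'')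
  · exact lovaszTheta_le_of_thetaValues_subset (thetaValues_subset_graphJoin_right G' G'')
end

section
/- If T(G) is the twinning of G — two disjoint copies of G with each vertex of one copy joined to every neighbor (in G) of the corresponding vertex in the other copy — then ϑ(T(G)) = 2·ϑ(G). More generally, for any graph obtained from the disjoint union of two copies of G by adding a subset of the twinning edges, ϑ equals 2·ϑ(G). -/
/-- The twinning `T(G)` of `G`: two copies of `G`, each vertex of one copy
joined to every neighbor of the corresponding vertex in the other copy:
`(u,a) ∼ (v,b)` iff `u ∼ v` in `G`. -/
def twinning {V : Type*} (G : SimpleGraph V) : SimpleGraph (V × Bool) where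
  Adj p q := G.Adj p.1 q.1
  symm := ⟨fun _ _ h => h.symm⟩
  loopless := ⟨fun p h => G.irrefl h⟩

/-- The disjoint union of two copies of `G`, on the vertex set `V × Bool`. -/
def twoCopies {V : Type*} (G : SimpleGraph V) : SimpleGraph (V × Bool) where
  Adj p q := G.Adj p.1 q.1 ∧ p.2 = q.2
  symm := ⟨fun _ _ h => ⟨h.1.symm, h.2.symm⟩⟩
  loopless := ⟨fun p h => G.irrefl h.1⟩

section OrthoRep

variable {V W : Type*}

def IsOrthoRep (G : SimpleGraph V) {d : ℕ} (u : V → EuclideanSpace ℝ (Fin d))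
    (ψ : EuclideanSpace ℝ (Fin d)) : Prop :=
  (∀ i, ‖u i‖ = 1) ∧ ‖ψ‖ = 1 ∧ ∀ i j, G.Adj i j → inner ℝ (u i) (u j) = 0

namespace IsOrthoRep

variable {G G' : SimpleGraph V} {d : ℕ} {u : V → EuclideanSpace ℝ (Fin d)}
  {ψ : EuclideanSpace ℝ (Fin d)}

theorem comap (h : IsOrthoRep G u ψ) (f : W → V) : IsOrthoRep (G.comap f) (u ∘ f) ψ :=
  ⟨fun i => h.1 (f i), h.2.1, fun i j hij => h.2.2 (f i) (f j) hij⟩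

theorem mono (h : IsOrthoRep G' u ψ) (hle : G ≤ G') : IsOrthoRep G u ψ :=
  ⟨h.1, h.2.1, fun i j hij => h.2.2 i j (hle hij)⟩

theorem sum_inner_sq_le_card [Fintype V] (h : IsOrthoRep G u ψ) :
    ∑ i, inner ℝ ψ (u i) ^ 2 ≤ Fintype.card V := by
  calc ∑ i, inner ℝ ψ (u i) ^ 2 ≤ ∑ _i : V, (1 : ℝ) := Finset.sum_le_sum fun i _ => by
        rw [sq_le_one_iff_abs_le_one]
        simpa [h.1 i, h.2.1] using abs_real_inner_le_norm ψ (u i)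
    _ = Fintype.card V := by simp

end IsOrthoRep

theorem exists_isOrthoRep [Fintype V] (G : SimpleGraph V) :
    ∃ (d : ℕ) (u : V → EuclideanSpace ℝ (Fin d)) (ψ : EuclideanSpace ℝ (Fin d)),
      IsOrthoRep G u ψ := by
  -- the extra coordinate leaves room for a unit vector `ψ` even when `V` is empty
  let e : V ↪ Fin (Fintype.card V + 1) := (Fintype.equivFin V).toEmbedding.trans Fin.castSuccEmb
  have hon := EuclideanSpace.orthonormal_single (𝕜 := ℝ) (ι := Fin (Fintype.card V + 1))
  exact ⟨_, fun i => EuclideanSpace.single (e i) 1, EuclideanSpace.single (Fin.last _) 1,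
    fun _ => hon.1 _, hon.1 _, fun _ _ hij => hon.inner_eq_zero (e.injective.ne hij.ne)⟩

section Theta

variable [Fintype V] {G G' : SimpleGraph V}

theorem lovaszTheta_eq_sSup (G : SimpleGraph V) :
    lovaszTheta G = sSup {x : ℝ | ∃ (d : ℕ) (u : V → EuclideanSpace ℝ (Fin d))
      (ψ : EuclideanSpace ℝ (Fin d)), IsOrthoRep G u ψ ∧ x = ∑ i, inner ℝ ψ (u i) ^ 2} := by
  simp only [lovaszTheta, IsOrthoRep, and_assoc]

theorem le_lovaszTheta {d : ℕ} {u : V → EuclideanSpace ℝ (Fin d)} {ψ : EuclideanSpace ℝ (Fin d)}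
    (h : IsOrthoRep G u ψ) : ∑ i, inner ℝ ψ (u i) ^ 2 ≤ lovaszTheta G := by
  rw [lovaszTheta_eq_sSup]
  refine le_csSup ⟨Fintype.card V, ?_⟩ ⟨d, u, ψ, h, rfl⟩
  rintro x ⟨d, u, ψ, hu, rfl⟩
  exact hu.sum_inner_sq_le_card

theorem lovaszTheta_le {c : ℝ}
    (h : ∀ (d : ℕ) (u : V → EuclideanSpace ℝ (Fin d)) (ψ : EuclideanSpace ℝ (Fin d)),
      IsOrthoRep G u ψ → ∑ i, inner ℝ ψ (u i) ^ 2 ≤ c) :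
    lovaszTheta G ≤ c := by
  rw [lovaszTheta_eq_sSup]
  obtain ⟨d, u, ψ, hu⟩ := exists_isOrthoRep G
  refine csSup_le ⟨_, d, u, ψ, hu, rfl⟩ ?_
  rintro x ⟨d, u, ψ, hu, rfl⟩
  exact h d u ψ hu

theorem lovaszTheta_anti (hle : G ≤ G') : lovaszTheta G' ≤ lovaszTheta G :=
  lovaszTheta_le fun _ _ _ hu => le_lovaszTheta (hu.mono hle)

end Theta

theorem twinning_eq_comap (G : SimpleGraph V) : twinning G = G.comap Prod.fst := rfl

theorem comap_twoCopies (G : SimpleGraph V) (b : Bool) :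
    (twoCopies G).comap (fun v => (v, b)) = G := by
  ext; simp [twoCopies]

theorem twoCopies_le_twinning (G : SimpleGraph V) : twoCopies G ≤ twinning G :=
  fun _ _ h => h.1

theorem two_mul_lovaszTheta_le_twinning [Fintype V] (G : SimpleGraph V) :
    2 * lovaszTheta G ≤ lovaszTheta (twinning G) := by
  rw [← le_div_iff₀' two_pos]
  refine lovaszTheta_le fun d u ψ hu => (le_div_iff₀' two_pos).2 ?_
  calc 2 * ∑ v, inner ℝ ψ (u v) ^ 2 = ∑ p : V × Bool, inner ℝ ψ (u p.1) ^ 2 := by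
        simp [Fintype.sum_prod_type, Finset.sum_add_distrib, two_mul]
    _ ≤ lovaszTheta (twinning G) := by
        rw [twinning_eq_comap]
        exact le_lovaszTheta (hu.comap Prod.fst)

theorem lovaszTheta_twoCopies_le [Fintype V] (G : SimpleGraph V) :
    lovaszTheta (twoCopies G) ≤ 2 * lovaszTheta G := by
  refine lovaszTheta_le fun d w ψ hw => ?_
  have hcopy (b : Bool) : ∑ v, inner ℝ ψ (w (v, b)) ^ 2 ≤ lovaszTheta G := by
    simpa [comap_twoCopies] using le_lovaszTheta (hw.comap fun v => (v, b))
  rw [Fintype.sum_prod_type, Finset.sum_comm, Fintype.sum_bool]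
  linarith [hcopy true, hcopy false]

end OrthoRep

/-- `ϑ(T(G)) = 2 ϑ(G)`, and more generally any partial twinning (a graph
between the disjoint union of two copies of `G` and the twinning `T(G)` in the
edge-subset order) has Lovász number `2 ϑ(G)`. -/
theorem stmt_8 {V : Type*} [Fintype V] (G : SimpleGraph V) :
    lovaszTheta (twinning G) = 2 * lovaszTheta G ∧
    ∀ H : SimpleGraph (V × Bool), twoCopies G ≤ H → H ≤ twinning G →
      lovaszTheta H = 2 * lovaszTheta G := by
  have sandwich (H : SimpleGraph (V × Bool)) (hlo : twoCopies G ≤ H) (hhi : H ≤ twinning G) :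
      lovaszTheta H = 2 * lovaszTheta G :=
    le_antisymm ((lovaszTheta_anti hlo).trans (lovaszTheta_twoCopies_le G))
      ((two_mul_lovaszTheta_le_twinning G).trans (lovaszTheta_anti hhi))
  exact ⟨sandwich _ (twoCopies_le_twinning G) le_rfl, sandwich⟩
end

section
/- (Exclusivity principle on two copies of C₅) If p : {0,...,4} → [0,1] is a constant distribution p_i = P on the pentagon, and the product distribution on two independent copies satisfies the exclusivity constraint ∑_{i=0}^{4} P² ≤ 1 (since the five paired events are pairwise exclusive), then P ≤ 1/√5 and hence ∑_i p_i ≤ √5. -/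
/-! If `n` pairwise exclusive events each have probability `P²`, then `n P² ≤ 1`, so
`|P| ≤ 1/√n` and the total weight `n P` of `n` events of probability `P` is at most `√n`;
for the pentagon `n = 5` and `√5 = ϑ(C₅)`. -/

namespace Real

theorem le_one_div_sqrt_of_mul_sq_le_one {n x : ℝ} (hn : 0 < n) (h : n * x ^ 2 ≤ 1) :
    x ≤ 1 / √n := by
  have hx : x ^ 2 ≤ 1 / n := by rw [le_div_iff₀ hn]; linarith
  calc x ≤ |x| := le_abs_self x
    _ ≤ √(1 / n) := abs_le_sqrt hx
    _ = 1 / √n := by rw [sqrt_div' 1 hn.le, sqrt_one]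

theorem mul_le_sqrt_of_mul_sq_le_one {n x : ℝ} (hn : 0 ≤ n) (h : n * x ^ 2 ≤ 1) :
    n * x ≤ √n := by
  have hsq : (n * x) ^ 2 ≤ n := by nlinarith
  exact (le_abs_self _).trans (abs_le_sqrt hsq)

end Real

theorem stmt_12_general (p : Fin 5 → ℝ) (P : ℝ) (hconst : ∀ i, p i = P)
    (hE : ∑ _i : Fin 5, P ^ 2 ≤ 1) :
    P ≤ 1 / Real.sqrt 5 ∧ ∑ i : Fin 5, p i ≤ Real.sqrt 5 := by
  have hE' : (5 : ℝ) * P ^ 2 ≤ 1 := by simpa using hE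
  have hsum : ∑ i : Fin 5, p i = 5 * P := by simp [hconst]
  exact ⟨Real.le_one_div_sqrt_of_mul_sq_le_one (by norm_num) hE',
    hsum ▸ Real.mul_le_sqrt_of_mul_sq_le_one (by norm_num) hE'⟩

/-- Exclusivity principle on two copies of the pentagon: if `p` is a constant
distribution `p i = P` on the five vertices and the exclusivity constraint on
the five pairwise exclusive paired events gives `∑_{i<5} P² ≤ 1`, then
`P ≤ 1/√5` and hence `∑ i, p i ≤ √5`. -/
theorem stmt_12 (p : Fin 5 → ℝ) (P : ℝ) (hconst : ∀ i, p i = P)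
    (h0 : 0 ≤ P) (h1 : P ≤ 1)
    (hE : ∑ _i : Fin 5, P ^ 2 ≤ 1) :
    P ≤ 1 / Real.sqrt 5 ∧ ∑ i : Fin 5, p i ≤ Real.sqrt 5 :=
  stmt_12_general p P hconst hE
end

section
/- (CHSH inequality) If A₁, A₂, B₁, B₂ are ±1-valued random variables on a common probability space, then E[A₁B₁] + E[A₁B₂] + E[A₂B₁] − E[A₂B₂] ≤ 2. -/
/-!
Pointwise, `a₁ b₁ + a₁ b₂ + a₂ b₁ - a₂ b₂ = a₁ (b₁ + b₂) + a₂ (b₁ - b₂)` is at most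
`|b₁ + b₂| + |b₁ - b₂| = 2 max(|b₁|, |b₂|) ≤ 2` whenever all four numbers lie in `[-1, 1]`.
Integrating this bound against a probability measure gives the inequality.
-/

open MeasureTheory

theorem chsh_of_abs_le_one {a₁ a₂ b₁ b₂ : ℝ} (ha₁ : |a₁| ≤ 1) (ha₂ : |a₂| ≤ 1)
    (hb₁ : |b₁| ≤ 1) (hb₂ : |b₂| ≤ 1) :
    a₁ * b₁ + a₁ * b₂ + a₂ * b₁ - a₂ * b₂ ≤ 2 := by
  rw [abs_le] at ha₁ ha₂ hb₁ hb₂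
  have h₁ : a₁ * (b₁ + b₂) ≤ |b₁ + b₂| := by
    rcases abs_cases (b₁ + b₂) with ⟨h, _⟩ | ⟨h, _⟩ <;> rw [h] <;> nlinarith
  have h₂ : a₂ * (b₁ - b₂) ≤ |b₁ - b₂| := by
    rcases abs_cases (b₁ - b₂) with ⟨h, _⟩ | ⟨h, _⟩ <;> rw [h] <;> nlinarith
  have h₃ : |b₁ + b₂| + |b₁ - b₂| ≤ 2 := by
    rcases abs_cases (b₁ + b₂) with ⟨h, _⟩ | ⟨h, _⟩ <;>
      rcases abs_cases (b₁ - b₂) with ⟨h', _⟩ | ⟨h', _⟩ <;> linarith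
  linarith

theorem abs_le_one_of_eq_one_or_eq_neg_one {a : ℝ} (h : a = 1 ∨ a = -1) : |a| ≤ 1 := by
  rcases h with rfl | rfl <;> simp

section Integral

variable {Ω : Type*} [MeasurableSpace Ω] {μ : Measure Ω}

theorem integrable_mul_of_ae_abs_le_one [IsFiniteMeasure μ] {f g : Ω → ℝ}
    (hf : AEStronglyMeasurable f μ) (hg : AEStronglyMeasurable g μ)
    (hf₁ : ∀ᵐ ω ∂μ, |f ω| ≤ 1) (hg₁ : ∀ᵐ ω ∂μ, |g ω| ≤ 1) :
    Integrable (fun ω => f ω * g ω) μ :=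
  Integrable.of_bound (hf.mul hg) 1 <| by
    filter_upwards [hf₁, hg₁] with ω hfω hgω
    rw [Real.norm_eq_abs, abs_mul]
    exact mul_le_one₀ hfω (abs_nonneg _) hgω

theorem chsh_integral_le_two [IsProbabilityMeasure μ] {A₁ A₂ B₁ B₂ : Ω → ℝ}
    (hA₁ : AEStronglyMeasurable A₁ μ) (hA₂ : AEStronglyMeasurable A₂ μ)
    (hB₁ : AEStronglyMeasurable B₁ μ) (hB₂ : AEStronglyMeasurable B₂ μ)
    (hA₁₁ : ∀ᵐ ω ∂μ, |A₁ ω| ≤ 1) (hA₂₁ : ∀ᵐ ω ∂μ, |A₂ ω| ≤ 1)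
    (hB₁₁ : ∀ᵐ ω ∂μ, |B₁ ω| ≤ 1) (hB₂₁ : ∀ᵐ ω ∂μ, |B₂ ω| ≤ 1) :
    (∫ ω, A₁ ω * B₁ ω ∂μ) + (∫ ω, A₁ ω * B₂ ω ∂μ) +
      (∫ ω, A₂ ω * B₁ ω ∂μ) - (∫ ω, A₂ ω * B₂ ω ∂μ) ≤ 2 := by
  have h₁₁ := integrable_mul_of_ae_abs_le_one hA₁ hB₁ hA₁₁ hB₁₁
  have h₁₂ := integrable_mul_of_ae_abs_le_one hA₁ hB₂ hA₁₁ hB₂₁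
  have h₂₁ := integrable_mul_of_ae_abs_le_one hA₂ hB₁ hA₂₁ hB₁₁
  have h₂₂ := integrable_mul_of_ae_abs_le_one hA₂ hB₂ hA₂₁ hB₂₁
  have hA₁B : Integrable (fun ω => A₁ ω * B₁ ω + A₁ ω * B₂ ω) μ := h₁₁.add h₁₂
  have hsum : Integrable (fun ω => A₁ ω * B₁ ω + A₁ ω * B₂ ω + A₂ ω * B₁ ω) μ := hA₁B.add h₂₁
  calc (∫ ω, A₁ ω * B₁ ω ∂μ) + (∫ ω, A₁ ω * B₂ ω ∂μ) +
        (∫ ω, A₂ ω * B₁ ω ∂μ) - (∫ ω, A₂ ω * B₂ ω ∂μ)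
      = ∫ ω, A₁ ω * B₁ ω + A₁ ω * B₂ ω + A₂ ω * B₁ ω - A₂ ω * B₂ ω ∂μ := by
        rw [integral_sub hsum h₂₂, integral_add hA₁B h₂₁, integral_add h₁₁ h₁₂]
    _ ≤ ∫ _, (2 : ℝ) ∂μ :=
        integral_mono_ae (hsum.sub h₂₂) (integrable_const 2) <| by
          filter_upwards [hA₁₁, hA₂₁, hB₁₁, hB₂₁] with ω ha₁ ha₂ hb₁ hb₂
          exact chsh_of_abs_le_one ha₁ ha₂ hb₁ hb₂
    _ = 2 := by simp

end Integral

/-- The CHSH inequality: if `A₁, A₂, B₁, B₂` are `±1`-valued random variables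
on a common probability space, then
`E[A₁B₁] + E[A₁B₂] + E[A₂B₁] − E[A₂B₂] ≤ 2`. -/
theorem stmt_13 {Ω : Type*} [MeasurableSpace Ω] (μ : Measure Ω)
    [IsProbabilityMeasure μ]
    (A₁ A₂ B₁ B₂ : Ω → ℝ)
    (hA₁ : Measurable A₁) (hA₂ : Measurable A₂)
    (hB₁ : Measurable B₁) (hB₂ : Measurable B₂)
    (hA₁v : ∀ ω, A₁ ω = 1 ∨ A₁ ω = -1) (hA₂v : ∀ ω, A₂ ω = 1 ∨ A₂ ω = -1)
    (hB₁v : ∀ ω, B₁ ω = 1 ∨ B₁ ω = -1) (hB₂v : ∀ ω, B₂ ω = 1 ∨ B₂ ω = -1) :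
    (∫ ω, A₁ ω * B₁ ω ∂μ) + (∫ ω, A₁ ω * B₂ ω ∂μ) +
      (∫ ω, A₂ ω * B₁ ω ∂μ) - (∫ ω, A₂ ω * B₂ ω ∂μ) ≤ 2 :=
  chsh_integral_le_two hA₁.aestronglyMeasurable hA₂.aestronglyMeasurable
    hB₁.aestronglyMeasurable hB₂.aestronglyMeasurable
    (.of_forall fun ω => abs_le_one_of_eq_one_or_eq_neg_one (hA₁v ω))
    (.of_forall fun ω => abs_le_one_of_eq_one_or_eq_neg_one (hA₂v ω))
    (.of_forall fun ω => abs_le_one_of_eq_one_or_eq_neg_one (hB₁v ω))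
    (.of_forall fun ω => abs_le_one_of_eq_one_or_eq_neg_one (hB₂v ω))
end
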